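/- For the Puiseux monoid P = ⟨(p² − 1)/p : p prime⟩, 0 is not a limit point of P, P is not bounded, and ρ_k(P) < ∞ for all k ∈ ℕ. -/

import Mathlib

/-- A Puiseux monoid: an additive submonoid of ℚ consisting of nonnegative rationals. -/
def PM.Puiseux (P : AddSubmonoid ℚ) : Prop := ∀ x ∈ P, 0 ≤ x

/-- `a` is an atom of `P`. -/
def PM.IsAtom (P : AddSubmonoid ℚ) (a : ℚ) : Prop :=
  a ∈ P ∧ a ≠ 0 ∧ ∀ x ∈ P, ∀ y ∈ P, a = x + y → x = 0 ∨ y = 0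

/-- A factorization of `x` is a multiset of atoms of `P` summing to `x`. -/
def PM.IsFactorization (P : AddSubmonoid ℚ) (x : ℚ) (z : Multiset ℚ) : Prop :=
  (∀ a ∈ z, PM.IsAtom P a) ∧ z.sum = x

/-- The set of lengths of `x`. -/
def PM.Lengths (P : AddSubmonoid ℚ) (x : ℚ) : Set ℕ :=
  {n | ∃ z : Multiset ℚ, PM.IsFactorization P x z ∧ Multiset.card z = n}

/-- `P` is atomic: it is generated by its set of atoms. -/
def PM.Atomic (P : AddSubmonoid ℚ) : Prop :=
  AddSubmonoid.closure {a | PM.IsAtom P a} = P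

/-- The union of sets of lengths `U_k(P)`. -/
def PM.U (P : AddSubmonoid ℚ) (k : ℕ) : Set ℕ :=
  {l | ∃ x ∈ P, k ∈ PM.Lengths P x ∧ l ∈ PM.Lengths P x}

/-!
The generator `gen p = p - 1/p` is the only one whose denominator is divisible by `p`, so two
factorizations of the same element use `gen p` equally often modulo `p`. Hence an element below
`gen p` has denominator prime to `p`, and no bounded set generates the monoid. If a factorization
of length `k` uses `gen p` more often than another one, then `p ≤ k`; so the atoms it has in
excess are each smaller than `k`, weigh at most `k²` together, and this weight is also the excess
weight of the other factorization, whose excess length it bounds since all atoms exceed `1`.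
-/

def Rat.denCoprime (n : ℕ) : Subring ℚ where
  carrier := {x | x.den.Coprime n}
  zero_mem' := Nat.coprime_one_left n
  one_mem' := Nat.coprime_one_left n
  add_mem' {x y} hx hy := Nat.Coprime.coprime_dvd_left (Rat.add_den_dvd x y) (hx.mul_left hy)
  mul_mem' {x y} hx hy := Nat.Coprime.coprime_dvd_left (Rat.mul_den_dvd x y) (hx.mul_left hy)
  neg_mem' {x} hx := by simpa [Rat.den_neg_eq_den] using hx

namespace Rat

lemma dvd_of_mem_denCoprime_of_mul_eq {n : ℕ} {m : ℤ} {y : ℚ} (hy : y ∈ denCoprime n)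
    (h : (n : ℚ) * y = m) : (n : ℤ) ∣ m := by
  have hnum : (n : ℤ) * y.num = m * y.den := by
    have := congrArg (· * (y.den : ℚ)) h
    simp only [mul_assoc, Rat.mul_den_eq_num] at this
    exact_mod_cast this
  exact (Nat.isCoprime_iff_coprime.mpr hy.symm).dvd_of_dvd_mul_right ⟨y.num, hnum.symm⟩

end Rat

lemma AddSubmonoid.eq_zero_or_le_of_mem_closure {M : Type*} [AddCommMonoid M] [LinearOrder M]
    [IsOrderedAddMonoid M] {s : Set M} {c : M} (hc : 0 ≤ c) (hs : ∀ a ∈ s, c ≤ a) {x : M}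
    (hx : x ∈ AddSubmonoid.closure s) : x = 0 ∨ c ≤ x := by
  induction hx using AddSubmonoid.closure_induction with
  | mem a ha => exact Or.inr (hs a ha)
  | zero => exact Or.inl rfl
  | add x y _ _ ihx ihy =>
    rcases ihx with rfl | hx
    · rwa [zero_add]
    · refine Or.inr (le_add_of_le_of_nonneg hx ?_)
      rcases ihy with rfl | hy
      exacts [le_rfl, hc.trans hy]

lemma Multiset.card_le_card_add_card_sub_mul_of_sum_eq {α : Type*} [CommRing α]
    [LinearOrder α] [IsStrictOrderedRing α] {z w : Multiset α} {B : α}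
    (hw : ∀ a ∈ w, 1 ≤ a) (hzw : ∀ a ∈ z - w, a ≤ B) (hsum : z.sum = w.sum) :
    (card w : α) ≤ card z + card (z - w) * B := by
  have hsub : (w - z).sum = (z - w).sum := by
    have hwsum := congrArg Multiset.sum (Multiset.sub_add_inter w z)
    have hzsum := congrArg Multiset.sum (Multiset.sub_add_inter z w)
    rw [Multiset.sum_add] at hwsum hzsum
    rw [Multiset.inter_comm] at hzsum
    linarith
  have hcard : card w ≤ card (w - z) + card z :=
    (Multiset.card_le_card (Multiset.le_sub_add (s := w) (t := z))).trans_eq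
      (Multiset.card_add _ _)
  have hlow : (card (w - z) : α) ≤ (w - z).sum := by
    simpa using Multiset.card_nsmul_le_sum (s := w - z) (a := 1)
      fun a ha => hw a (Multiset.mem_of_le (Multiset.sub_le_self w z) ha)
  have hup : (z - w).sum ≤ card (z - w) * B := by
    simpa using Multiset.sum_le_card_nsmul (z - w) B hzw
  have : (card w : α) ≤ card (w - z) + card z := by exact_mod_cast hcard
  linarith

namespace PM

lemma mem_of_isAtom_closure {s : Set ℚ} (hs : (0 : ℚ) ∉ s) {a : ℚ}
    (ha : IsAtom (AddSubmonoid.closure s) a) : a ∈ s := by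
  have hmem := ha.1
  revert ha
  induction hmem using AddSubmonoid.closure_induction_left with
  | zero => exact fun ha => absurd rfl ha.2.1
  | add_left x hx y hy _ =>
    intro ha
    rcases ha.2.2 x (AddSubmonoid.subset_closure hx) y hy rfl with rfl | rfl
    · exact absurd hx hs
    · rwa [add_zero]

def gen (p : ℕ) : ℚ := ((p : ℚ) ^ 2 - 1) / p

def primeGens : Set ℚ := {q | ∃ p : ℕ, p.Prime ∧ q = gen p}

lemma gen_eq_sub {p : ℕ} (hp : p ≠ 0) : gen p = p - 1 / p := by
  have : (p : ℚ) ≠ 0 := by exact_mod_cast hp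
  rw [gen]; field_simp

lemma sub_one_lt_gen {p : ℕ} (hp : 1 < p) : (p : ℚ) - 1 < gen p := by
  have hp' : (1 : ℚ) < p := by exact_mod_cast hp
  rw [gen_eq_sub (by omega)]
  linarith [(div_lt_one (by linarith : (0 : ℚ) < p)).mpr hp']

lemma gen_lt {p : ℕ} (hp : p ≠ 0) : gen p < p := by
  have : (0 : ℚ) < p := by exact_mod_cast Nat.pos_of_ne_zero hp
  rw [gen_eq_sub hp]
  linarith [one_div_pos.mpr this]

lemma three_halves_le_gen {p : ℕ} (hp : 2 ≤ p) : 3 / 2 ≤ gen p := by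
  have hp' : (2 : ℚ) ≤ p := by exact_mod_cast hp
  rw [gen_eq_sub (by omega)]
  linarith [one_div_le_one_div_of_le two_pos hp']

lemma den_gen_dvd (p : ℕ) : (gen p).den ∣ p := by
  have h : gen p = Rat.divInt ((p : ℤ) ^ 2 - 1) p := by
    rw [Rat.divInt_eq_div, gen]; push_cast; ring
  exact_mod_cast h ▸ Rat.den_dvd ((p : ℤ) ^ 2 - 1) p

lemma gen_mem_denCoprime {p q : ℕ} (hp : p.Prime) (hq : q.Prime) (hpq : p ≠ q) :
    gen p ∈ Rat.denCoprime q :=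
  Nat.Coprime.coprime_dvd_left (den_gen_dvd p) ((Nat.coprime_primes hp hq).mpr hpq)

lemma dvd_of_zsmul_gen_mem_denCoprime {q : ℕ} (hq : q ≠ 0) {m : ℤ}
    (h : m • gen q ∈ Rat.denCoprime q) : (q : ℤ) ∣ m := by
  have hq' : (q : ℚ) ≠ 0 := by exact_mod_cast hq
  have hdiv : (m : ℚ) / q ∈ Rat.denCoprime q := by
    have : (m : ℚ) / q = ((m * q : ℤ) : ℚ) - m • gen q := by
      rw [zsmul_eq_mul, gen_eq_sub hq]; push_cast; ring
    exact this ▸ sub_mem (intCast_mem _ _) h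
  exact Rat.dvd_of_mem_denCoprime_of_mul_eq hdiv (mul_div_cancel₀ _ hq')

lemma gen_not_mem_denCoprime {q : ℕ} (hq : 1 < q) : gen q ∉ Rat.denCoprime q := by
  intro h
  have := dvd_of_zsmul_gen_mem_denCoprime (q := q) (m := 1) (by omega) (by rwa [one_zsmul])
  have := Int.le_of_dvd one_pos this
  omega

lemma three_halves_le_of_mem_primeGens {a : ℚ} (ha : a ∈ primeGens) : 3 / 2 ≤ a := by
  obtain ⟨p, hp, rfl⟩ := ha
  exact three_halves_le_gen hp.two_le

lemma zero_not_mem_primeGens : (0 : ℚ) ∉ primeGens :=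
  fun h => by linarith [three_halves_le_of_mem_primeGens h]

lemma sum_sub_count_nsmul_gen_mem_denCoprime {q : ℕ} (hq : q.Prime) {z : Multiset ℚ}
    (hz : ∀ a ∈ z, a ∈ primeGens) :
    z.sum - z.count (gen q) • gen q ∈ Rat.denCoprime q := by
  have hsplit := congrArg Multiset.sum (Multiset.filter_add_not (· = gen q) z)
  rw [Multiset.sum_add, Multiset.filter_eq', Multiset.sum_replicate] at hsplit
  rw [← hsplit, add_sub_cancel_left]
  refine multiset_sum_mem _ fun a ha => ?_
  obtain ⟨haz, hne⟩ := Multiset.mem_filter.mp ha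
  obtain ⟨p, hp, rfl⟩ := hz a haz
  exact gen_mem_denCoprime hp hq (fun hpq => hne (hpq ▸ rfl))

lemma dvd_count_sub_count {q : ℕ} (hq : q.Prime) {z w : Multiset ℚ}
    (hz : ∀ a ∈ z, a ∈ primeGens) (hw : ∀ a ∈ w, a ∈ primeGens) (hsum : z.sum = w.sum) :
    (q : ℤ) ∣ (z.count (gen q) : ℤ) - w.count (gen q) := by
  refine dvd_of_zsmul_gen_mem_denCoprime hq.ne_zero ?_
  have := sub_mem (sum_sub_count_nsmul_gen_mem_denCoprime hq hw)
    (sum_sub_count_nsmul_gen_mem_denCoprime hq hz)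
  convert this using 1
  rw [hsum, sub_zsmul, natCast_zsmul, natCast_zsmul]
  abel

lemma le_card_of_mem_sub {z w : Multiset ℚ} (hz : ∀ a ∈ z, a ∈ primeGens)
    (hw : ∀ a ∈ w, a ∈ primeGens) (hsum : z.sum = w.sum) {a : ℚ} (ha : a ∈ z - w) :
    a ≤ Multiset.card z := by
  obtain ⟨r, hr, rfl⟩ := hz a (Multiset.mem_of_le (Multiset.sub_le_self z w) ha)
  have hlt : w.count (gen r) < z.count (gen r) := by
    rw [← Multiset.count_pos, Multiset.count_sub] at ha
    omega
  have hr_le : r ≤ z.count (gen r) := by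
    have := Int.le_of_dvd (by omega) (dvd_count_sub_count hr hz hw hsum)
    omega
  calc gen r ≤ r := (gen_lt hr.ne_zero).le
    _ ≤ Multiset.card z := by exact_mod_cast hr_le.trans (Multiset.count_le_card _ _)

lemma mem_denCoprime_of_lt_gen {Q : ℕ} (hQ : Q.Prime) {x : ℚ}
    (hx : x ∈ AddSubmonoid.closure primeGens) (hlt : x < gen Q) : x ∈ Rat.denCoprime Q := by
  have hnonneg : ∀ y ∈ AddSubmonoid.closure primeGens, 0 ≤ y := fun y hy => by
    rcases AddSubmonoid.eq_zero_or_le_of_mem_closure le_rfl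
      (fun a ha => by linarith [three_halves_le_of_mem_primeGens ha]) hy with h | h
    exacts [h.ge, h]
  revert hlt
  induction hx using AddSubmonoid.closure_induction with
  | mem a ha =>
    obtain ⟨p, hp, rfl⟩ := ha
    exact fun hlt => gen_mem_denCoprime hp hQ (by rintro rfl; exact hlt.false)
  | zero => exact fun _ => zero_mem _
  | add x y hx hy ihx ihy =>
    intro hlt
    exact add_mem (ihx (by linarith [hnonneg y hy])) (ihy (by linarith [hnonneg x hx]))

lemma card_le_of_sum_eq {z w : Multiset ℚ} (hz : ∀ a ∈ z, a ∈ primeGens)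
    (hw : ∀ a ∈ w, a ∈ primeGens) (hsum : z.sum = w.sum) :
    Multiset.card w ≤ Multiset.card z + Multiset.card z * Multiset.card z := by
  have h := Multiset.card_le_card_add_card_sub_mul_of_sum_eq
    (fun a ha => by linarith [three_halves_le_of_mem_primeGens (hw a ha)])
    (fun a ha => le_card_of_mem_sub hz hw hsum ha) hsum
  have hsub : (Multiset.card (z - w) : ℚ) ≤ Multiset.card z := by
    exact_mod_cast Multiset.card_le_card (Multiset.sub_le_self z w)
  have : (Multiset.card w : ℚ) ≤ Multiset.card z + Multiset.card z * Multiset.card z := by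
    nlinarith [(Multiset.card z).cast_nonneg (α := ℚ)]
  exact_mod_cast this

end PM

open PM in
theorem stmt18 :
    let P := AddSubmonoid.closure
      {q : ℚ | ∃ p : ℕ, p.Prime ∧ q = ((p : ℚ) ^ 2 - 1) / p}
    (∃ q : ℚ, 0 < q ∧ ∀ x ∈ P, x ≠ 0 → q ≤ x) ∧
    (¬ ∃ A : Set ℚ, BddAbove A ∧ AddSubmonoid.closure A = P) ∧
    ∀ k : ℕ, (PM.U P k).Finite := by
  intro P
  have hP : P = AddSubmonoid.closure primeGens := rfl
  refine ⟨⟨3 / 2, by norm_num, fun x hx hx0 => ?_⟩, ?_, fun k => ?_⟩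
  · exact (AddSubmonoid.eq_zero_or_le_of_mem_closure (by norm_num)
      (fun a => three_halves_le_of_mem_primeGens) (hP ▸ hx)).resolve_left hx0
  · rintro ⟨A, ⟨M, hM⟩, hA⟩
    obtain ⟨Q, hQM, hQ⟩ := Nat.exists_infinite_primes (⌈M⌉₊ + 1)
    have hMQ : M < gen Q := by
      have : (⌈M⌉₊ : ℚ) + 1 ≤ Q := by exact_mod_cast hQM
      linarith [Nat.le_ceil M, sub_one_lt_gen hQ.one_lt]
    have hPQ : P ≤ (Rat.denCoprime Q).toAddSubmonoid := hA ▸ AddSubmonoid.closure_le.mpr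
      fun a ha => mem_denCoprime_of_lt_gen hQ
        ((hA.trans hP).le (AddSubmonoid.subset_closure ha)) ((hM ha).trans_lt hMQ)
    exact gen_not_mem_denCoprime hQ.one_lt (hPQ (AddSubmonoid.subset_closure ⟨Q, hQ, rfl⟩))
  · refine (Set.finite_Iic (k + k * k)).subset ?_
    rintro l ⟨x, -, ⟨z, ⟨hza, rfl⟩, rfl⟩, ⟨w, ⟨hwa, hw⟩, rfl⟩⟩
    exact card_le_of_sum_eq (fun a ha => mem_of_isAtom_closure zero_not_mem_primeGens (hza a ha))
      (fun a ha => mem_of_isAtom_closure zero_not_mem_primeGens (hwa a ha)) hw.symm
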